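/- arXiv:1402.0253 — 3 statements merged into one kernel-verified Lean document; each statement's English description precedes it below -/
import Mathlib

section
/- Let C be a symmetric monoidal category equipped, for every object A, with morphisms η_A : 𝟙 ⟶ A and μ_A : A ⊗ A ⟶ A such that: (i) naturality: for every morphism f : A ⟶ B one has η_A ≫ f = η_B and (f ⊗ f) ≫ μ_B = μ_A ≫ f; (ii) unit laws: (η_A ⊗ id_A) ≫ μ_A = λ_A and (id_A ⊗ η_A) ≫ μ_A = ρ_A; (iii) compatibility with the tensor product: for all A, B, μ_{A⊗B} = tensorμ(A,B,A,B) ≫ (μ_A ⊗ μ_B) and η_{A⊗B} = λ_𝟙⁻¹ ≫ (η_A ⊗ η_B), and moreover η_𝟙 = id_𝟙 and μ_𝟙 = λ_𝟙. Then the unit object 𝟙 is an initial object of C, and for all objects A, B the morphisms ρ_A⁻¹ ≫ (id_A ⊗ η_B) : A ⟶ A ⊗ B and λ_B⁻¹ ≫ (η_A ⊗ id_B) : B ⟶ A ⊗ B exhibit A ⊗ B as a binary coproduct of A and B; in particular C is cocartesian monoidal. -/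
/-!
The unit is initial because `η` is natural and `η 𝟙 = 𝟙`. For the tensor product, a cocone
`f : A ⟶ X`, `g : B ⟶ X` is matched by `(f ⊗ g) ≫ μ X`; the unit laws make this commute with the
coprojections. Uniqueness follows from naturality of `μ` once the fold map of the coprojections,
`(ι₁ ⊗ ι₂) ≫ μ (A ⊗ B)`, is the identity, which is where the compatibility of `μ` with `⊗` enters.
-/

open CategoryTheory MonoidalCategory Limits

universe v u

variable {C : Type u} [Category.{v} C]

def isInitialOfNatural {I : C} (η : ∀ A : C, I ⟶ A)
    (η_natural : ∀ {A B : C} (f : A ⟶ B), η A ≫ f = η B) (η_self : η I = 𝟙 I) :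
    IsInitial I :=
  IsInitial.ofUniqueHom η fun A m => by rw [← η_natural m, η_self, Category.id_comp]

section Monoidal

variable [MonoidalCategory C]

def isColimitOfFold {A B : C} (ι₁ : A ⟶ A ⊗ B) (ι₂ : B ⟶ A ⊗ B) (μ : ∀ X : C, X ⊗ X ⟶ X)
    (μ_natural : ∀ {X Y : C} (f : X ⟶ Y), (f ⊗ₘ f) ≫ μ Y = μ X ≫ f)
    (inl_fold : ∀ {X : C} (f : A ⟶ X) (g : B ⟶ X), ι₁ ≫ (f ⊗ₘ g) ≫ μ X = f)
    (inr_fold : ∀ {X : C} (f : A ⟶ X) (g : B ⟶ X), ι₂ ≫ (f ⊗ₘ g) ≫ μ X = g)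
    (fold_self : (ι₁ ⊗ₘ ι₂) ≫ μ (A ⊗ B) = 𝟙 (A ⊗ B)) : IsColimit (BinaryCofan.mk ι₁ ι₂) :=
  BinaryCofan.isColimitMk (fun s => (s.inl ⊗ₘ s.inr) ≫ μ s.pt) (fun s => inl_fold s.inl s.inr)
    (fun s => inr_fold s.inl s.inr) fun s m h₁ h₂ => by
      rw [← Category.id_comp m, ← fold_self, Category.assoc, ← μ_natural m,
        tensorHom_comp_tensorHom_assoc, h₁, h₂]

variable (η : ∀ A : C, 𝟙_ C ⟶ A) (μ : ∀ A : C, A ⊗ A ⟶ A)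

lemma rightUnitor_inv_comp_tensorHom_η_comp_tensorHom_comp
    (η_natural : ∀ {A B : C} (f : A ⟶ B), η A ≫ f = η B)
    (unit_right : ∀ A : C, (𝟙 A ⊗ₘ η A) ≫ μ A = (ρ_ A).hom)
    {A B X : C} (f : A ⟶ X) (g : B ⟶ X) :
    ((ρ_ A).inv ≫ (𝟙 A ⊗ₘ η B)) ≫ (f ⊗ₘ g) ≫ μ X = f := by
  have interchange : (𝟙 A ⊗ₘ η B) ≫ (f ⊗ₘ g) = (f ⊗ₘ 𝟙 (𝟙_ C)) ≫ (𝟙 X ⊗ₘ η X) := by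
    simp only [tensorHom_comp_tensorHom, Category.id_comp, Category.comp_id, η_natural]
  rw [Category.assoc, reassoc_of% interchange, unit_right, tensorHom_id, rightUnitor_naturality,
    Iso.inv_hom_id_assoc]

lemma leftUnitor_inv_comp_η_tensorHom_comp_tensorHom_comp
    (η_natural : ∀ {A B : C} (f : A ⟶ B), η A ≫ f = η B)
    (unit_left : ∀ A : C, (η A ⊗ₘ 𝟙 A) ≫ μ A = (λ_ A).hom)
    {A B X : C} (f : A ⟶ X) (g : B ⟶ X) :
    ((λ_ B).inv ≫ (η A ⊗ₘ 𝟙 B)) ≫ (f ⊗ₘ g) ≫ μ X = g := by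
  have interchange : (η A ⊗ₘ 𝟙 B) ≫ (f ⊗ₘ g) = (𝟙 (𝟙_ C) ⊗ₘ g) ≫ (η X ⊗ₘ 𝟙 X) := by
    simp only [tensorHom_comp_tensorHom, Category.id_comp, Category.comp_id, η_natural]
  rw [Category.assoc, reassoc_of% interchange, unit_left, id_tensorHom, leftUnitor_naturality,
    Iso.inv_hom_id_assoc]

lemma tensorμ_comp_rightUnitor_tensorHom_leftUnitor [BraidedCategory C] (A B : C) :
    tensorμ A (𝟙_ C) (𝟙_ C) B ≫ ((ρ_ A).hom ⊗ₘ (λ_ B).hom) = (ρ_ A).hom ⊗ₘ (λ_ B).hom := by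
  dsimp only [tensorμ]
  rw [braiding_tensorUnit_left]
  monoidal

lemma coprojections_tensorHom_comp_μ_tensor [BraidedCategory C]
    (unit_left : ∀ A : C, (η A ⊗ₘ 𝟙 A) ≫ μ A = (λ_ A).hom)
    (unit_right : ∀ A : C, (𝟙 A ⊗ₘ η A) ≫ μ A = (ρ_ A).hom)
    (μ_tensor : ∀ A B : C, μ (A ⊗ B) = tensorμ A B A B ≫ (μ A ⊗ₘ μ B)) (A B : C) :
    (((ρ_ A).inv ≫ (𝟙 A ⊗ₘ η B)) ⊗ₘ ((λ_ B).inv ≫ (η A ⊗ₘ 𝟙 B))) ≫ μ (A ⊗ B) = 𝟙 (A ⊗ B) := by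
  rw [μ_tensor, ← tensorHom_comp_tensorHom, Category.assoc, tensorμ_natural_assoc,
    tensorHom_comp_tensorHom, unit_right, unit_left, tensorμ_comp_rightUnitor_tensorHom_leftUnitor,
    tensorHom_comp_tensorHom, Iso.inv_hom_id, Iso.inv_hom_id, id_tensorHom_id]

end Monoidal

theorem unit_isInitial_and_tensor_isBinaryCoproduct_of_central_monoid_general
    {C : Type u} [Category.{v} C] [MonoidalCategory C] [SymmetricCategory C]
    (η : ∀ A : C, 𝟙_ C ⟶ A) (μ : ∀ A : C, A ⊗ A ⟶ A)
    (η_natural : ∀ {A B : C} (f : A ⟶ B), η A ≫ f = η B)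
    (μ_natural : ∀ {A B : C} (f : A ⟶ B), (f ⊗ₘ f) ≫ μ B = μ A ≫ f)
    (unit_left : ∀ A : C, (η A ⊗ₘ 𝟙 A) ≫ μ A = (λ_ A).hom)
    (unit_right : ∀ A : C, (𝟙 A ⊗ₘ η A) ≫ μ A = (ρ_ A).hom)
    (μ_tensor : ∀ A B : C, μ (A ⊗ B) = tensorμ A B A B ≫ (μ A ⊗ₘ μ B))
    (η_unit : η (𝟙_ C) = 𝟙 (𝟙_ C)) :
    Nonempty (IsInitial (𝟙_ C)) ∧
      ∀ A B : C, Nonempty (IsColimit (BinaryCofan.mk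
        ((ρ_ A).inv ≫ (𝟙 A ⊗ₘ η B)) ((λ_ B).inv ≫ (η A ⊗ₘ 𝟙 B)))) :=
  ⟨⟨isInitialOfNatural η η_natural η_unit⟩, fun A B =>
    ⟨isColimitOfFold _ _ μ μ_natural
      (rightUnitor_inv_comp_tensorHom_η_comp_tensorHom_comp η μ η_natural unit_right)
      (leftUnitor_inv_comp_η_tensorHom_comp_tensorHom_comp η μ η_natural unit_left)
      (coprojections_tensorHom_comp_μ_tensor η μ unit_left unit_right μ_tensor A B)⟩⟩

/-- A symmetric monoidal category with a natural commutative-monoid structure on every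
object, compatible with the tensor product, is cocartesian monoidal: the unit is initial
and the tensor product is a binary coproduct, via the indicated coprojections. -/
theorem unit_isInitial_and_tensor_isBinaryCoproduct_of_central_monoid
    {C : Type u} [Category.{v} C] [MonoidalCategory C] [SymmetricCategory C]
    (η : ∀ A : C, 𝟙_ C ⟶ A) (μ : ∀ A : C, A ⊗ A ⟶ A)
    (η_natural : ∀ {A B : C} (f : A ⟶ B), η A ≫ f = η B)
    (μ_natural : ∀ {A B : C} (f : A ⟶ B), (f ⊗ₘ f) ≫ μ B = μ A ≫ f)
    (unit_left : ∀ A : C, (η A ⊗ₘ 𝟙 A) ≫ μ A = (λ_ A).hom)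
    (unit_right : ∀ A : C, (𝟙 A ⊗ₘ η A) ≫ μ A = (ρ_ A).hom)
    (μ_tensor : ∀ A B : C, μ (A ⊗ B) = tensorμ A B A B ≫ (μ A ⊗ₘ μ B))
    (η_tensor : ∀ A B : C, η (A ⊗ B) = (λ_ (𝟙_ C)).inv ≫ (η A ⊗ₘ η B))
    (η_unit : η (𝟙_ C) = 𝟙 (𝟙_ C))
    (μ_unit : μ (𝟙_ C) = (λ_ (𝟙_ C)).hom) :
    Nonempty (IsInitial (𝟙_ C)) ∧
      ∀ A B : C, Nonempty (IsColimit (BinaryCofan.mk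
        ((ρ_ A).inv ≫ (𝟙 A ⊗ₘ η B)) ((λ_ B).inv ≫ (η A ⊗ₘ 𝟙 B)))) :=
  unit_isInitial_and_tensor_isBinaryCoproduct_of_central_monoid_general η μ η_natural μ_natural
    unit_left unit_right μ_tensor η_unit
end

section
/- Let C be a symmetric monoidal category equipped, for every object A, with morphisms η_A : 𝟙 ⟶ A and μ_A : A ⊗ A ⟶ A such that: (i) naturality: for every morphism f : A ⟶ B one has η_A ≫ f = η_B and (f ⊗ f) ≫ μ_B = μ_A ≫ f; (ii) unit laws: (η_A ⊗ id_A) ≫ μ_A = λ_A and (id_A ⊗ η_A) ≫ μ_A = ρ_A; (iii') the weak compatibility condition: for all objects A, B, writing inl = ρ_A⁻¹ ≫ (id_A ⊗ η_B) : A ⟶ A ⊗ B and inr = λ_B⁻¹ ≫ (η_A ⊗ id_B) : B ⟶ A ⊗ B, one has (inl ⊗ inr) ≫ μ_{A⊗B} = id_{A⊗B}. Then the unit object 𝟙 is an initial object of C, and for all objects A, B the morphisms inl and inr exhibit A ⊗ B as a binary coproduct of A and B; in particular C is cocartesian monoidal. -/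
open CategoryTheory MonoidalCategory Limits

universe v u

/-! The copairing of `f : A ⟶ X` and `g : B ⟶ X` is `(f ⊗ g) ≫ μ_X`. Naturality of `η` and the
unit laws give `inl ≫ (f ⊗ g) ≫ μ_X = f` and `inr ≫ (f ⊗ g) ≫ μ_X = g`; naturality of `μ` and
the weak compatibility condition show that every `m : A ⊗ B ⟶ X` is the copairing of
`inl ≫ m` and `inr ≫ m`. Initiality of `𝟙` is the same argument with no summands: every
`m : 𝟙 ⟶ X` equals `η_𝟙 ≫ m = η_X`, once the unit laws force `η_𝟙 = 𝟙`. -/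

namespace CategoryTheory.MonoidalCategory

variable {C : Type u} [Category.{v} C] [MonoidalCategory C]

def tensorInl (η : ∀ A : C, 𝟙_ C ⟶ A) (A B : C) : A ⟶ A ⊗ B :=
  (ρ_ A).inv ≫ (𝟙 A ⊗ₘ η B)

def tensorInr (η : ∀ A : C, 𝟙_ C ⟶ A) (A B : C) : B ⟶ A ⊗ B :=
  (λ_ B).inv ≫ (η A ⊗ₘ 𝟙 B)

variable {η : ∀ A : C, 𝟙_ C ⟶ A} {μ : ∀ A : C, A ⊗ A ⟶ A}

lemma eta_unit_eq_id (η_natural : ∀ {A B : C} (f : A ⟶ B), η A ≫ f = η B)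
    (unit_right : (𝟙 (𝟙_ C) ⊗ₘ η (𝟙_ C)) ≫ μ (𝟙_ C) = (ρ_ (𝟙_ C)).hom) :
    η (𝟙_ C) = 𝟙 (𝟙_ C) :=
  calc η (𝟙_ C) = η (𝟙_ C) ≫ (λ_ (𝟙_ C)).inv ≫ μ (𝟙_ C) := (η_natural _).symm
    _ = (λ_ (𝟙_ C)).inv ≫ (𝟙 (𝟙_ C) ⊗ₘ η (𝟙_ C)) ≫ μ (𝟙_ C) := by
      rw [id_tensorHom, ← leftUnitor_inv_naturality_assoc]
    _ = 𝟙 (𝟙_ C) := by rw [unit_right, ← unitors_equal, Iso.inv_hom_id]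

def isInitialUnitOfNatural (η_natural : ∀ {A B : C} (f : A ⟶ B), η A ≫ f = η B)
    (η_unit : η (𝟙_ C) = 𝟙 (𝟙_ C)) : IsInitial (𝟙_ C) :=
  IsInitial.ofUniqueHom η fun _ m => by rw [← η_natural m, η_unit, Category.id_comp]

lemma tensorInl_comp_tensorHom_comp (η_natural : ∀ {A B : C} (f : A ⟶ B), η A ≫ f = η B)
    (unit_right : ∀ A : C, (𝟙 A ⊗ₘ η A) ≫ μ A = (ρ_ A).hom)
    {A B X : C} (f : A ⟶ X) (g : B ⟶ X) :
    tensorInl η A B ≫ (f ⊗ₘ g) ≫ μ X = f := by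
  have : (𝟙 A ⊗ₘ η B) ≫ (f ⊗ₘ g) = (f ⊗ₘ 𝟙 (𝟙_ C)) ≫ (𝟙 X ⊗ₘ η X) := by
    simp only [tensorHom_comp_tensorHom, Category.id_comp, Category.comp_id, η_natural]
  rw [tensorInl, Category.assoc, reassoc_of% this, unit_right, tensorHom_id,
    rightUnitor_naturality, Iso.inv_hom_id_assoc]

lemma tensorInr_comp_tensorHom_comp (η_natural : ∀ {A B : C} (f : A ⟶ B), η A ≫ f = η B)
    (unit_left : ∀ A : C, (η A ⊗ₘ 𝟙 A) ≫ μ A = (λ_ A).hom)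
    {A B X : C} (f : A ⟶ X) (g : B ⟶ X) :
    tensorInr η A B ≫ (f ⊗ₘ g) ≫ μ X = g := by
  have : (η A ⊗ₘ 𝟙 B) ≫ (f ⊗ₘ g) = (𝟙 (𝟙_ C) ⊗ₘ g) ≫ (η X ⊗ₘ 𝟙 X) := by
    simp only [tensorHom_comp_tensorHom, Category.id_comp, Category.comp_id, η_natural]
  rw [tensorInr, Category.assoc, reassoc_of% this, unit_left, id_tensorHom,
    leftUnitor_naturality, Iso.inv_hom_id_assoc]

lemma eq_tensorHom_comp_of_weak_compat
    (μ_natural : ∀ {A B : C} (f : A ⟶ B), (f ⊗ₘ f) ≫ μ B = μ A ≫ f)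
    {A B X : C} (weak_compat : (tensorInl η A B ⊗ₘ tensorInr η A B) ≫ μ (A ⊗ B) = 𝟙 (A ⊗ B))
    (m : A ⊗ B ⟶ X) :
    m = ((tensorInl η A B ≫ m) ⊗ₘ (tensorInr η A B ≫ m)) ≫ μ X := by
  rw [← tensorHom_comp_tensorHom, Category.assoc, μ_natural, reassoc_of% weak_compat]

def isColimitTensorCofan (η_natural : ∀ {A B : C} (f : A ⟶ B), η A ≫ f = η B)
    (μ_natural : ∀ {A B : C} (f : A ⟶ B), (f ⊗ₘ f) ≫ μ B = μ A ≫ f)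
    (unit_left : ∀ A : C, (η A ⊗ₘ 𝟙 A) ≫ μ A = (λ_ A).hom)
    (unit_right : ∀ A : C, (𝟙 A ⊗ₘ η A) ≫ μ A = (ρ_ A).hom)
    {A B : C} (weak_compat : (tensorInl η A B ⊗ₘ tensorInr η A B) ≫ μ (A ⊗ B) = 𝟙 (A ⊗ B)) :
    IsColimit (BinaryCofan.mk (tensorInl η A B) (tensorInr η A B)) :=
  BinaryCofan.isColimitMk (fun s => (s.inl ⊗ₘ s.inr) ≫ μ s.pt)
    (fun s => tensorInl_comp_tensorHom_comp η_natural unit_right s.inl s.inr)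
    (fun s => tensorInr_comp_tensorHom_comp η_natural unit_left s.inl s.inr)
    (fun s m hl hr => by
      rw [eq_tensorHom_comp_of_weak_compat μ_natural weak_compat m, hl, hr])

end CategoryTheory.MonoidalCategory

theorem unit_isInitial_and_tensor_isBinaryCoproduct_of_weak_central_monoid_general
    {C : Type u} [Category.{v} C] [MonoidalCategory C]
    (η : ∀ A : C, 𝟙_ C ⟶ A) (μ : ∀ A : C, A ⊗ A ⟶ A)
    (η_natural : ∀ {A B : C} (f : A ⟶ B), η A ≫ f = η B)
    (μ_natural : ∀ {A B : C} (f : A ⟶ B), (f ⊗ₘ f) ≫ μ B = μ A ≫ f)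
    (unit_left : ∀ A : C, (η A ⊗ₘ 𝟙 A) ≫ μ A = (λ_ A).hom)
    (unit_right : ∀ A : C, (𝟙 A ⊗ₘ η A) ≫ μ A = (ρ_ A).hom)
    (weak_compat : ∀ A B : C,
      ((((ρ_ A).inv ≫ (𝟙 A ⊗ₘ η B)) ⊗ₘ ((λ_ B).inv ≫ (η A ⊗ₘ 𝟙 B))) ≫ μ (A ⊗ B)) = 𝟙 (A ⊗ B)) :
    Nonempty (IsInitial (𝟙_ C)) ∧
      ∀ A B : C, Nonempty (IsColimit (BinaryCofan.mk
        ((ρ_ A).inv ≫ (𝟙 A ⊗ₘ η B)) ((λ_ B).inv ≫ (η A ⊗ₘ 𝟙 B)))) :=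
  ⟨⟨isInitialUnitOfNatural η_natural (eta_unit_eq_id η_natural (unit_right _))⟩,
    fun A B => ⟨isColimitTensorCofan η_natural μ_natural unit_left unit_right (weak_compat A B)⟩⟩

/-- A symmetric monoidal category with a natural unital multiplication on every object,
satisfying the weak compatibility condition `(inl ⊗ inr) ≫ μ_{A⊗B} = id`, is cocartesian
monoidal: the unit is initial and the tensor product is a binary coproduct, via the
indicated coprojections. -/
theorem unit_isInitial_and_tensor_isBinaryCoproduct_of_weak_central_monoid
    {C : Type u} [Category.{v} C] [MonoidalCategory C] [SymmetricCategory C]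
    (η : ∀ A : C, 𝟙_ C ⟶ A) (μ : ∀ A : C, A ⊗ A ⟶ A)
    (η_natural : ∀ {A B : C} (f : A ⟶ B), η A ≫ f = η B)
    (μ_natural : ∀ {A B : C} (f : A ⟶ B), (f ⊗ₘ f) ≫ μ B = μ A ≫ f)
    (unit_left : ∀ A : C, (η A ⊗ₘ 𝟙 A) ≫ μ A = (λ_ A).hom)
    (unit_right : ∀ A : C, (𝟙 A ⊗ₘ η A) ≫ μ A = (ρ_ A).hom)
    (weak_compat : ∀ A B : C,
      ((((ρ_ A).inv ≫ (𝟙 A ⊗ₘ η B)) ⊗ₘ ((λ_ B).inv ≫ (η A ⊗ₘ 𝟙 B))) ≫ μ (A ⊗ B)) = 𝟙 (A ⊗ B)) :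
    Nonempty (IsInitial (𝟙_ C)) ∧
      ∀ A B : C, Nonempty (IsColimit (BinaryCofan.mk
        ((ρ_ A).inv ≫ (𝟙 A ⊗ₘ η B)) ((λ_ B).inv ≫ (η A ⊗ₘ 𝟙 B)))) :=
  unit_isInitial_and_tensor_isBinaryCoproduct_of_weak_central_monoid_general η μ η_natural μ_natural
    unit_left unit_right weak_compat
end

section
/- Let C be a braided monoidal category, X an object of C, η : 𝟙 ⟶ X a morphism, and μ₁, μ₂ : X ⊗ X ⟶ X two multiplications each satisfying the unit laws with respect to η (that is, (η ⊗ id_X) ≫ μ_i = λ_X and (id_X ⊗ η) ≫ μ_i = ρ_X for i = 1, 2), and satisfying the interchange law (μ₁ ⊗ μ₁) ≫ μ₂ = tensorμ(X,X,X,X) ≫ (μ₂ ⊗ μ₂) ≫ μ₁. Then μ₁ = μ₂; moreover μ₁ is commutative (β_{X,X} ≫ μ₁ = μ₁) and associative (α_{X,X,X} ≫ (id_X ⊗ μ₁) ≫ μ₁ = (μ₁ ⊗ id_X) ≫ μ₁), so that (X, η, μ₁) is a commutative monoid object of C. -/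
/-!
Eckmann–Hilton: precompose the interchange law with `η` placed in two of the four slots of
`(X ⊗ X) ⊗ (X ⊗ X)`. Units in the two middle slots collapse it to `μ₁ = μ₂`, units in the two
outer slots to `μ₂ = β ≫ μ₁`, and a single unit in the third slot to associativity. The only
coherence needed is the value of `tensorμ` when some of its arguments are `𝟙_ C`.
-/

open CategoryTheory MonoidalCategory Limits

universe v u

namespace CategoryTheory.MonoidalCategory

variable {C : Type u} [Category.{v} C] [MonoidalCategory C] [BraidedCategory C]

lemma tensorμ_tensorUnit_tensorUnit (X Y : C) : tensorμ X (𝟙_ C) (𝟙_ C) Y = 𝟙 _ := by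
  simp only [tensorμ, braiding_tensorUnit_left, unitors_equal]
  monoidal

lemma tensorμ_comp_leftUnitor_tensorHom_rightUnitor (X Y : C) :
    tensorμ (𝟙_ C) X Y (𝟙_ C) ≫ ((λ_ Y).hom ⊗ₘ (ρ_ X).hom) =
      ((λ_ X).hom ⊗ₘ (ρ_ Y).hom) ≫ (β_ X Y).hom := by
  simp only [tensorμ, tensorHom_def]
  monoidal

lemma tensorμ_comp_rightUnitor_whiskerRight (X Y Z : C) :
    tensorμ X Y (𝟙_ C) Z ≫ (ρ_ X).hom ▷ (Y ⊗ Z) = (X ⊗ Y) ◁ (λ_ Z).hom ≫ (α_ X Y Z).hom := by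
  simp only [tensorμ, braiding_tensorUnit_right]
  monoidal

end CategoryTheory.MonoidalCategory

namespace CategoryTheory.EckmannHilton

variable {C : Type u} [Category.{v} C] [MonoidalCategory C] [BraidedCategory C]
  {X : C} {η : 𝟙_ C ⟶ X} {μ₁ μ₂ : X ⊗ X ⟶ X}

lemma interchange_tensorHom
    (interchange : (μ₁ ⊗ₘ μ₁) ≫ μ₂ = tensorμ X X X X ≫ (μ₂ ⊗ₘ μ₂) ≫ μ₁)
    {A₁ A₂ B₁ B₂ : C} (f₁ : A₁ ⟶ X) (f₂ : A₂ ⟶ X) (g₁ : B₁ ⟶ X) (g₂ : B₂ ⟶ X) :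
    ((f₁ ⊗ₘ f₂) ≫ μ₁ ⊗ₘ (g₁ ⊗ₘ g₂) ≫ μ₁) ≫ μ₂ =
      tensorμ A₁ A₂ B₁ B₂ ≫ ((f₁ ⊗ₘ g₁) ≫ μ₂ ⊗ₘ (f₂ ⊗ₘ g₂) ≫ μ₂) ≫ μ₁ := by
  rw [← tensorHom_comp_tensorHom, ← tensorHom_comp_tensorHom, Category.assoc, interchange,
    tensorμ_natural_assoc, Category.assoc]

lemma eq_of_interchange
    (unit_left₁ : (η ⊗ₘ 𝟙 X) ≫ μ₁ = (λ_ X).hom) (unit_right₁ : (𝟙 X ⊗ₘ η) ≫ μ₁ = (ρ_ X).hom)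
    (unit_left₂ : (η ⊗ₘ 𝟙 X) ≫ μ₂ = (λ_ X).hom) (unit_right₂ : (𝟙 X ⊗ₘ η) ≫ μ₂ = (ρ_ X).hom)
    (interchange : (μ₁ ⊗ₘ μ₁) ≫ μ₂ = tensorμ X X X X ≫ (μ₂ ⊗ₘ μ₂) ≫ μ₁) :
    μ₁ = μ₂ := by
  have h := interchange_tensorHom interchange (𝟙 X) η η (𝟙 X)
  rw [unit_left₁, unit_right₁, unit_left₂, unit_right₂, tensorμ_tensorUnit_tensorUnit,
    Category.id_comp] at h
  exact (cancel_epi _).1 h.symm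

lemma braiding_comp_eq_of_interchange
    (unit_left₁ : (η ⊗ₘ 𝟙 X) ≫ μ₁ = (λ_ X).hom) (unit_right₁ : (𝟙 X ⊗ₘ η) ≫ μ₁ = (ρ_ X).hom)
    (unit_left₂ : (η ⊗ₘ 𝟙 X) ≫ μ₂ = (λ_ X).hom) (unit_right₂ : (𝟙 X ⊗ₘ η) ≫ μ₂ = (ρ_ X).hom)
    (interchange : (μ₁ ⊗ₘ μ₁) ≫ μ₂ = tensorμ X X X X ≫ (μ₂ ⊗ₘ μ₂) ≫ μ₁) :
    (β_ X X).hom ≫ μ₁ = μ₂ := by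
  have h := interchange_tensorHom interchange η (𝟙 X) (𝟙 X) η
  rw [unit_left₁, unit_right₁, unit_left₂, unit_right₂,
    reassoc_of% tensorμ_comp_leftUnitor_tensorHom_rightUnitor] at h
  exact (cancel_epi _).1 h.symm

lemma assoc_of_interchange
    (unit_left₁ : (η ⊗ₘ 𝟙 X) ≫ μ₁ = (λ_ X).hom) (unit_right₂ : (𝟙 X ⊗ₘ η) ≫ μ₂ = (ρ_ X).hom)
    (interchange : (μ₁ ⊗ₘ μ₁) ≫ μ₂ = tensorμ X X X X ≫ (μ₂ ⊗ₘ μ₂) ≫ μ₁) :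
    (α_ X X X).hom ≫ X ◁ μ₂ ≫ μ₁ = μ₁ ▷ X ≫ μ₂ := by
  have h := interchange_tensorHom interchange (𝟙 X) (𝟙 X) η (𝟙 X)
  simp only [unit_left₁, unit_right₂, id_tensorHom_id, Category.id_comp] at h
  rw [tensorHom_def', MonoidalCategory.tensorHom_def] at h
  simp only [Category.assoc, reassoc_of% tensorμ_comp_rightUnitor_whiskerRight] at h
  exact (cancel_epi _).1 h.symm

end CategoryTheory.EckmannHilton

/-- Eckmann–Hilton for monoid objects: in a braided monoidal category, two unital
multiplications on the same object with the same unit which satisfy the interchange law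
coincide, and the resulting multiplication is commutative and associative, so that we get
a commutative monoid object. -/
theorem eckmannHilton_commMonObj
    {C : Type u} [Category.{v} C] [MonoidalCategory C] [BraidedCategory C]
    (X : C) (η : 𝟙_ C ⟶ X) (μ₁ μ₂ : X ⊗ X ⟶ X)
    (unit_left₁ : (η ⊗ₘ 𝟙 X) ≫ μ₁ = (λ_ X).hom)
    (unit_right₁ : (𝟙 X ⊗ₘ η) ≫ μ₁ = (ρ_ X).hom)
    (unit_left₂ : (η ⊗ₘ 𝟙 X) ≫ μ₂ = (λ_ X).hom)
    (unit_right₂ : (𝟙 X ⊗ₘ η) ≫ μ₂ = (ρ_ X).hom)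
    (interchange : (μ₁ ⊗ₘ μ₁) ≫ μ₂ = tensorμ X X X X ≫ (μ₂ ⊗ₘ μ₂) ≫ μ₁) :
    μ₁ = μ₂ ∧
    ((β_ X X).hom ≫ μ₁ = μ₁) ∧
    ((α_ X X X).hom ≫ (𝟙 X ⊗ₘ μ₁) ≫ μ₁ = (μ₁ ⊗ₘ 𝟙 X) ≫ μ₁) := by
  have h₁₂ :=
    EckmannHilton.eq_of_interchange unit_left₁ unit_right₁ unit_left₂ unit_right₂ interchange
  have comm := EckmannHilton.braiding_comp_eq_of_interchange unit_left₁ unit_right₁ unit_left₂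
    unit_right₂ interchange
  have assoc := EckmannHilton.assoc_of_interchange unit_left₁ unit_right₂ interchange
  subst h₁₂
  exact ⟨rfl, comm, by simpa only [id_tensorHom, tensorHom_id] using assoc⟩
end
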